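/- arXiv:2210.08172 — 3 statements merged into one kernel-verified Lean document; each statement's English description precedes it below -/
import Mathlib

section
/- The matrices G⁺(λ) = I − v N⁻¹ Γ̂ v̂ and (G⁻(λ))⁻¹ = I + v Γ N⁻¹ v̂, with N the Cauchy-type matrix N_{jk} = ⟨v̂_j | v_k⟩ / (λ_k − λ̂_j), Γ = diag((λ−λ_k)⁻¹), Γ̂ = diag((λ−λ̂_j)⁻¹), satisfy G⁺(λ)(G⁻(λ))⁻¹ = I for all λ distinct from all λ_k and λ̂_j. -/
open Matrix

/-- The dressing factors `G⁺(λ) = I − v N⁻¹ Γ̂ v̂` and `(G⁻(λ))⁻¹ = I + v Γ N⁻¹ v̂`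
built from the Cauchy-type matrix `N_{jk} = ⟨v̂_j|v_k⟩/(λ_k − λ̂_j)` satisfy
`G⁺(λ) (G⁻(λ))⁻¹ = I` for all `λ` distinct from the `λ_k` and `λ̂_j`. -/
theorem stmt_3 (n : ℕ) (hn : 1 ≤ n)
    (lams lamhs : Fin n → ℂ)
    (hinj : Function.Injective lams) (hinjh : Function.Injective lamhs)
    (hdist : ∀ j k : Fin n, lams k ≠ lamhs j)
    (v : Matrix (Fin 3) (Fin n) ℂ) (vh : Matrix (Fin n) (Fin 3) ℂ)
    (N : Matrix (Fin n) (Fin n) ℂ)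
    (hN : ∀ j k : Fin n, N j k = (vh * v) j k / (lams k - lamhs j))
    (hNinv : IsUnit N)
    (lam : ℂ) (hlam : ∀ k : Fin n, lam ≠ lams k) (hlamh : ∀ j : Fin n, lam ≠ lamhs j) :
    (1 - v * N⁻¹ * Matrix.diagonal (fun j => (lam - lamhs j)⁻¹) * vh) *
      (1 + v * Matrix.diagonal (fun k => (lam - lams k)⁻¹) * N⁻¹ * vh) = 1 := by
  set Γ : Matrix (Fin n) (Fin n) ℂ := Matrix.diagonal (fun k => (lam - lams k)⁻¹) with hΓ
  set Γh : Matrix (Fin n) (Fin n) ℂ := Matrix.diagonal (fun j => (lam - lamhs j)⁻¹) with hΓh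
  have hkey : Γh * (vh * v) * Γ = N * Γ - Γh * N := by
    ext j k
    have h1 : lam - lams k ≠ 0 := sub_ne_zero.mpr (hlam k)
    have h2 : lam - lamhs j ≠ 0 := sub_ne_zero.mpr (hlamh j)
    have h3 : lams k - lamhs j ≠ 0 := sub_ne_zero.mpr (hdist j k)
    have hM : (vh * v) j k = N j k * (lams k - lamhs j) := by
      rw [hN j k]; field_simp
    rw [Matrix.sub_apply,
      show (Γh * (vh * v) * Γ) j k = (lam - lamhs j)⁻¹ * (vh * v) j k * (lam - lams k)⁻¹ by
        rw [hΓ, hΓh, Matrix.mul_diagonal, Matrix.diagonal_mul],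
      show (N * Γ) j k = N j k * (lam - lams k)⁻¹ by rw [hΓ, Matrix.mul_diagonal],
      show (Γh * N) j k = (lam - lamhs j)⁻¹ * N j k by rw [hΓh, Matrix.diagonal_mul],
      hM]
    field_simp
    ring
  have hNN : N⁻¹ * N = 1 := Matrix.nonsing_inv_mul N ((Matrix.isUnit_iff_isUnit_det N).mp hNinv)
  have hNN' : N * N⁻¹ = 1 := Matrix.mul_nonsing_inv N ((Matrix.isUnit_iff_isUnit_det N).mp hNinv)
  set X := v * N⁻¹ * Γh * vh with hX
  set Y := v * Γ * N⁻¹ * vh with hY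
  have hXY : X * Y = Y - X := by
    have : X * Y = v * (N⁻¹ * (Γh * (vh * v) * Γ) * N⁻¹) * vh := by
      rw [hX, hY]; simp only [Matrix.mul_assoc]
    rw [this, hkey]
    have : N⁻¹ * (N * Γ - Γh * N) * N⁻¹
        = Γ * N⁻¹ - N⁻¹ * Γh := by
      rw [Matrix.mul_sub, Matrix.sub_mul, ← Matrix.mul_assoc N⁻¹ N Γ, hNN, Matrix.one_mul,
        Matrix.mul_assoc N⁻¹ (Γh * N) N⁻¹, Matrix.mul_assoc Γh N N⁻¹, hNN', Matrix.mul_one]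
    rw [this, hX, hY]
    simp only [Matrix.mul_sub, Matrix.sub_mul, Matrix.mul_assoc]
  calc (1 - X) * (1 + Y) = 1 + Y - X - X * Y := by noncomm_ring
    _ = 1 := by rw [hXY]; abel
end

section
/- The asymptotic mass conservation holds for the degenerate two-soliton: with amplitudes A₁₁,± = 2b₁|coefficient| before/after collision given by A₁₁,₋ = (2b₁/√η₂)|γ₂₁*/γ₁₁* + 2ib₂γ₂₂*(γ₂₁*γ₂₂+γ₃₁*γ₃₂)/(γ₁₁*(|γ₂₂|²+|γ₃₂|²)(a₁−a₂−i(b₁+b₂)))| and A₂₁,₋ its analogue with γ₂→γ₃, and A₁₁,₊ = 2b₁|γ₂₁|/(|γ₁₁|√g₁), A₂₁,₊ = 2b₁|γ₃₁|/(|γ₁₁|√g₁), we have A₁₁,₋² + A₂₁,₋² = A₁₁,₊² + A₂₁,₊² = 4b₁². -/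
open Complex Real ComplexConjugate

/-!
Write `c = s·(a₁ - a₂ - i(b₁ + b₂))` with `s = |γ₂₂|² + |γ₃₂|²` and `P = γ̄₂₁γ₂₂ + γ̄₃₁γ₃₂`.
The pre-collision coefficients are `(γ̄ⱼ₁ c + 2ib₂ γ̄ⱼ₂ P) / (γ̄₁₁ c)`, and expanding the sum of
their squared moduli, the cross terms add up to `4b₂ (Im c) |P|²` because `Σⱼ γ̄ⱼ₁ γⱼ₂ = P`.
Together with `|c|² = s²|λ₁ - λ₂*|²` and `Im c = -s(b₁ + b₂)` this sum is exactly `η₂`, which is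
positive by Cauchy–Schwarz (`|P|² ≤ s·(|γ₂₁|² + |γ₃₁|²)`) and
`|λ₁ - λ₂*|² - 4b₁b₂ = |λ₁ - λ₂|² > 0`. Both amplitude pairs are then of the form
`(2b₁/√η)·(r₁, r₂)` with `r₁² + r₂² = η`.
-/

theorem norm_sq_add_norm_sq_pos {E : Type*} [NormedAddCommGroup E] {x y : E}
    (h : (x, y) ≠ 0) : 0 < ‖x‖ ^ 2 + ‖y‖ ^ 2 := by
  rw [Ne, Prod.mk_eq_zero, not_and_or] at h
  rcases h with h | h <;> positivity

theorem norm_mul_conj_add_mul_conj_sq_le (x₁ x₂ y₁ y₂ : ℂ) :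
    ‖x₁ * conj y₁ + x₂ * conj y₂‖ ^ 2 ≤ (‖x₁‖ ^ 2 + ‖x₂‖ ^ 2) * (‖y₁‖ ^ 2 + ‖y₂‖ ^ 2) := by
  have lagrange := normSq_nonneg (x₁ * y₂ - x₂ * y₁)
  simp only [Complex.sq_norm, normSq_apply, add_re, add_im, sub_re, sub_im, mul_re, mul_im,
    conj_re, conj_im] at *
  linear_combination lagrange

theorem normSq_conj_mul_add_normSq_conj_mul (x₁ x₂ y₁ y₂ c : ℂ) (r : ℝ) :
    normSq (conj x₁ * c + 2 * I * r * conj y₁ * (conj x₁ * y₁ + conj x₂ * y₂))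
      + normSq (conj x₂ * c + 2 * I * r * conj y₂ * (conj x₁ * y₁ + conj x₂ * y₂))
    = normSq c * (normSq x₁ + normSq x₂)
      + 4 * r ^ 2 * (normSq y₁ + normSq y₂) * normSq (conj x₁ * y₁ + conj x₂ * y₂)
      + 4 * r * c.im * normSq (conj x₁ * y₁ + conj x₂ * y₂) := by
  simp only [normSq_apply, add_re, add_im, mul_re, mul_im, conj_re, conj_im, I_re, I_im,
    ofReal_re, ofReal_im, re_ofNat, im_ofNat]
  ring

theorem amplitude_sq_add_sq {b η r₁ r₂ : ℝ} (hr : r₁ ^ 2 + r₂ ^ 2 = η) (hη : 0 < η) :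
    (2 * b / √η * r₁) ^ 2 + (2 * b / √η * r₂) ^ 2 = 4 * b ^ 2 := by
  rw [mul_pow, mul_pow, ← mul_add, hr, div_pow, sq_sqrt hη.le]
  field_simp
  ring

section PreCollision

variable (a₁ b₁ a₂ b₂ : ℝ) (γ₁₁ γ₂₁ γ₃₁ γ₂₂ γ₃₂ : ℂ)

/-- The coefficient whose modulus, times `2b₁/√η₂`, is the pre-collision amplitude of the
component `(γ, γ')`, i.e. `(γ₂₁, γ₂₂)` or `(γ₃₁, γ₃₂)`. -/
noncomputable def preCollisionCoeff (γ γ' : ℂ) : ℂ :=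
  conj γ / conj γ₁₁
    + 2 * I * (b₂ : ℂ) * conj γ' * (conj γ₂₁ * γ₂₂ + conj γ₃₁ * γ₃₂)
      / (conj γ₁₁ * ((‖γ₂₂‖ ^ 2 + ‖γ₃₂‖ ^ 2 : ℝ) : ℂ)
        * ((a₁ - a₂ : ℝ) - I * ((b₁ + b₂ : ℝ) : ℂ)))

theorem norm_sq_preCollisionCoeff_add (hb : 0 < b₁ + b₂) (h11 : γ₁₁ ≠ 0)
    (hs : 0 < ‖γ₂₂‖ ^ 2 + ‖γ₃₂‖ ^ 2) :
    ‖preCollisionCoeff a₁ b₁ a₂ b₂ γ₁₁ γ₂₁ γ₃₁ γ₂₂ γ₃₂ γ₂₁ γ₂₂‖ ^ 2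
      + ‖preCollisionCoeff a₁ b₁ a₂ b₂ γ₁₁ γ₂₁ γ₃₁ γ₂₂ γ₃₂ γ₃₁ γ₃₂‖ ^ 2
    = (‖γ₂₁‖ ^ 2 + ‖γ₃₁‖ ^ 2) / ‖γ₁₁‖ ^ 2
      - 4 * b₁ * b₂ * ‖γ₂₁ * conj γ₂₂ + γ₃₁ * conj γ₃₂‖ ^ 2
        / (‖γ₁₁‖ ^ 2 * (‖γ₂₂‖ ^ 2 + ‖γ₃₂‖ ^ 2) * ((a₁ - a₂) ^ 2 + (b₁ + b₂) ^ 2)) := by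
  set s : ℝ := ‖γ₂₂‖ ^ 2 + ‖γ₃₂‖ ^ 2 with hs_def
  set c : ℂ := s * ((a₁ - a₂ : ℝ) - I * ((b₁ + b₂ : ℝ) : ℂ))
  have hc_normSq : normSq c = s ^ 2 * ((a₁ - a₂) ^ 2 + (b₁ + b₂) ^ 2) := by
    simp only [c, normSq_apply, sub_re, sub_im, mul_re, mul_im, I_re, I_im, ofReal_re, ofReal_im]
    ring
  have hc_im : c.im = -(s * (b₁ + b₂)) := by
    simp only [c, sub_im, mul_im, I_re, I_im, ofReal_re, ofReal_im]
    ring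
  have hc : c ≠ 0 := by
    rw [← normSq_pos, hc_normSq]
    positivity
  have hcoeff (γ γ' : ℂ) : preCollisionCoeff a₁ b₁ a₂ b₂ γ₁₁ γ₂₁ γ₃₁ γ₂₂ γ₃₂ γ γ'
      = (conj γ * c + 2 * I * (b₂ : ℂ) * conj γ' * (conj γ₂₁ * γ₂₂ + conj γ₃₁ * γ₃₂))
        / (conj γ₁₁ * c) := by
    rw [add_div, mul_div_mul_right _ _ hc, preCollisionCoeff, mul_assoc (conj γ₁₁)]
  have hP : γ₂₁ * conj γ₂₂ + γ₃₁ * conj γ₃₂ = conj (conj γ₂₁ * γ₂₂ + conj γ₃₁ * γ₃₂) := by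
    simp
  simp only [hcoeff, hP, norm_div, div_pow, Complex.sq_norm, normSq_conj, normSq_mul, ← add_div,
    normSq_conj_mul_add_normSq_conj_mul, hc_normSq, hc_im]
  have hs' : normSq γ₂₂ + normSq γ₃₂ = s := by rw [hs_def, Complex.sq_norm, Complex.sq_norm]
  have h11' : normSq γ₁₁ ≠ 0 := normSq_eq_zero.not.mpr h11
  rw [hs']
  field_simp
  ring

theorem preCollision_eta_pos (hb₁ : 0 < b₁) (hb₂ : 0 < b₂) (hdist : (a₁, b₁) ≠ (a₂, b₂))
    (h11 : γ₁₁ ≠ 0) (hS : 0 < ‖γ₂₁‖ ^ 2 + ‖γ₃₁‖ ^ 2) (hs : 0 < ‖γ₂₂‖ ^ 2 + ‖γ₃₂‖ ^ 2) :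
    0 < (‖γ₂₁‖ ^ 2 + ‖γ₃₁‖ ^ 2) / ‖γ₁₁‖ ^ 2
      - 4 * b₁ * b₂ * ‖γ₂₁ * conj γ₂₂ + γ₃₁ * conj γ₃₂‖ ^ 2
        / (‖γ₁₁‖ ^ 2 * (‖γ₂₂‖ ^ 2 + ‖γ₃₂‖ ^ 2) * ((a₁ - a₂) ^ 2 + (b₁ + b₂) ^ 2)) := by
  have hgap : 0 < (a₁ - a₂) ^ 2 + (b₁ - b₂) ^ 2 := by
    rw [Ne, Prod.mk.injEq, not_and_or, ← sub_eq_zero, ← sub_eq_zero (a := b₁)] at hdist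
    rcases hdist with h | h <;> positivity
  have hcs : 4 * b₁ * b₂ * ‖γ₂₁ * conj γ₂₂ + γ₃₁ * conj γ₃₂‖ ^ 2
      < (‖γ₂₁‖ ^ 2 + ‖γ₃₁‖ ^ 2) * (‖γ₂₂‖ ^ 2 + ‖γ₃₂‖ ^ 2) * ((a₁ - a₂) ^ 2 + (b₁ + b₂) ^ 2) :=
    calc _ ≤ 4 * b₁ * b₂ * ((‖γ₂₁‖ ^ 2 + ‖γ₃₁‖ ^ 2) * (‖γ₂₂‖ ^ 2 + ‖γ₃₂‖ ^ 2)) := by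
          gcongr
          exact norm_mul_conj_add_mul_conj_sq_le γ₂₁ γ₃₁ γ₂₂ γ₃₂
      _ < _ := by linear_combination mul_pos (mul_pos hS hs) hgap
  rw [sub_pos, div_lt_div_iff₀ (by positivity) (by positivity)]
  linear_combination mul_lt_mul_of_pos_right hcs (by positivity : 0 < ‖γ₁₁‖ ^ 2)

end PreCollision

/-- Asymptotic mass conservation for the degenerate two-soliton: the pre- and
post-collision amplitudes of the two components satisfy
`A₁₁,₋² + A₂₁,₋² = A₁₁,₊² + A₂₁,₊² = 4b₁²`. -/
theorem stmt_16 (a₁ b₁ a₂ b₂ : ℝ) (hb₁ : 0 < b₁) (hb₂ : 0 < b₂)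
    (hdist : (a₁, b₁) ≠ (a₂, b₂))
    (γ₁₁ γ₂₁ γ₃₁ γ₂₂ γ₃₂ : ℂ)
    (h11 : γ₁₁ ≠ 0) (h21 : (γ₂₁, γ₃₁) ≠ 0) (h22 : (γ₂₂, γ₃₂) ≠ 0)
    (g₁ η₂ : ℝ)
    (hg₁ : g₁ = (‖γ₂₁‖ ^ 2 + ‖γ₃₁‖ ^ 2) / ‖γ₁₁‖ ^ 2)
    (hη₂ : η₂ = g₁ - 4 * b₁ * b₂
      * ‖(γ₂₁ * starRingEnd ℂ γ₂₂ + γ₃₁ * starRingEnd ℂ γ₃₂)‖ ^ 2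
      / (‖γ₁₁‖ ^ 2 * (‖γ₂₂‖ ^ 2 + ‖γ₃₂‖ ^ 2)
        * ((a₁ - a₂) ^ 2 + (b₁ + b₂) ^ 2)))
    (A₁₁m A₂₁m A₁₁p A₂₁p : ℝ)
    (hA₁₁m : A₁₁m = (2 * b₁ / Real.sqrt η₂) * ‖(starRingEnd ℂ γ₂₁ / starRingEnd ℂ γ₁₁
        + 2 * Complex.I * (b₂ : ℂ) * starRingEnd ℂ γ₂₂
            * (starRingEnd ℂ γ₂₁ * γ₂₂ + starRingEnd ℂ γ₃₁ * γ₃₂)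
          / (starRingEnd ℂ γ₁₁
              * ((‖γ₂₂‖ ^ 2 + ‖γ₃₂‖ ^ 2 : ℝ) : ℂ)
              * ((a₁ - a₂ : ℝ) - Complex.I * ((b₁ + b₂ : ℝ) : ℂ))))‖)
    (hA₂₁m : A₂₁m = (2 * b₁ / Real.sqrt η₂) * ‖(starRingEnd ℂ γ₃₁ / starRingEnd ℂ γ₁₁
        + 2 * Complex.I * (b₂ : ℂ) * starRingEnd ℂ γ₃₂
            * (starRingEnd ℂ γ₂₁ * γ₂₂ + starRingEnd ℂ γ₃₁ * γ₃₂)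
          / (starRingEnd ℂ γ₁₁
              * ((‖γ₂₂‖ ^ 2 + ‖γ₃₂‖ ^ 2 : ℝ) : ℂ)
              * ((a₁ - a₂ : ℝ) - Complex.I * ((b₁ + b₂ : ℝ) : ℂ))))‖)
    (hA₁₁p : A₁₁p = 2 * b₁ * ‖γ₂₁‖ / (‖γ₁₁‖ * Real.sqrt g₁))
    (hA₂₁p : A₂₁p = 2 * b₁ * ‖γ₃₁‖ / (‖γ₁₁‖ * Real.sqrt g₁)) :
    A₁₁m ^ 2 + A₂₁m ^ 2 = A₁₁p ^ 2 + A₂₁p ^ 2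
    ∧ A₁₁p ^ 2 + A₂₁p ^ 2 = 4 * b₁ ^ 2 := by
  have hS := norm_sq_add_norm_sq_pos h21
  have hs := norm_sq_add_norm_sq_pos h22
  have hg : 0 < g₁ := hg₁ ▸ div_pos hS (by positivity)
  have hη : 0 < η₂ := by
    rw [hη₂, hg₁]
    exact preCollision_eta_pos a₁ b₁ a₂ b₂ γ₁₁ γ₂₁ γ₃₁ γ₂₂ γ₃₂ hb₁ hb₂ hdist h11 hS hs
  have hpost : A₁₁p ^ 2 + A₂₁p ^ 2 = 4 * b₁ ^ 2 := by
    have hshape (x : ℝ) : 2 * b₁ * x / (‖γ₁₁‖ * √g₁) = 2 * b₁ / √g₁ * (x / ‖γ₁₁‖) := by ring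
    rw [hA₁₁p, hA₂₁p, hshape, hshape]
    exact amplitude_sq_add_sq (by rw [hg₁, div_pow, div_pow, add_div]) hg
  have hpre : A₁₁m ^ 2 + A₂₁m ^ 2 = 4 * b₁ ^ 2 := by
    rw [hA₁₁m, hA₂₁m]
    refine amplitude_sq_add_sq ?_ hη
    rw [hη₂, hg₁]
    exact norm_sq_preCollisionCoeff_add a₁ b₁ a₂ b₂ γ₁₁ γ₂₁ γ₃₁ γ₂₂ γ₃₂ (by positivity) h11 hs
  exact ⟨hpre.trans hpost.symm, hpost⟩
end

section
/- For the 2×2 reflectionless Riemann–Hilbert data with n = 1, the solution formula q₁ = −2i det(T₁)/det(N) with N = ⟨v̂₁|v₁⟩/(λ₁ − λ₁*) and T₁ the 2×2 bordered matrix, evaluated with ⟨v̂₁| = |v₁⟩†, reduces exactly to the sech expression q₁(x,t) = 2b₁γ₂₁*(γ₁₁*√g₁)⁻¹ e^{f₂} sech(f₁). -/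
open Complex Real Matrix

/-!
Write `y = b₁x + Im θ`. The norm `⟨v̂₁|v₁⟩ = |γ₁₁|² e^{2b₁x} + (|γ₂₁|² + |γ₃₁|²) e^{-2 Im θ}` and
`det T₁ = γ₂₁* γ₁₁ e^{b₁x - Im θ} e^{-i(Re θ + a₁x)}` share the factor `e^{b₁x - Im θ}`; after
cancelling it the denominator is `|γ₁₁|² (e^y + g₁ e^{-y}) = 2 |γ₁₁|² √g₁ cosh (y - log √g₁)`,
and `y - log √g₁ = f₁`, `-i(Re θ + a₁x) = f₂` for the given dispersion relation.
-/

theorem Real.exp_add_sq_mul_exp_neg {s : ℝ} (hs : 0 < s) (y : ℝ) :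
    Real.exp y + s ^ 2 * Real.exp (-y) = 2 * s * Real.cosh (y - Real.log s) := by
  rw [Real.cosh_eq, Real.exp_sub, neg_sub, Real.exp_sub, Real.exp_log hs, Real.exp_neg]
  field_simp

theorem Complex.conj_exp_mul_mul_self (z w : ℂ) :
    starRingEnd ℂ (exp z * w) * (exp z * w) = ((Real.exp (2 * z.re) * ‖w‖ ^ 2 : ℝ) : ℂ) := by
  rw [← normSq_eq_conj_mul_self, normSq_mul, normSq_eq_norm_sq, normSq_eq_norm_sq, norm_exp,
    ← Real.exp_nat_mul]
  push_cast
  ring_nf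

theorem Complex.inv_conj_eq_div_normSq (z : ℂ) : (starRingEnd ℂ z)⁻¹ = z / (normSq z : ℂ) := by
  rw [inv_def, conj_conj, normSq_conj, div_eq_mul_inv, ofReal_inv]

theorem sq_norm_add_sq_norm_pos {E F : Type*} [NormedAddCommGroup E] [NormedAddCommGroup F]
    {a : E} {b : F} (h : (a, b) ≠ 0) : 0 < ‖a‖ ^ 2 + ‖b‖ ^ 2 := by
  have hpos : 0 < max ‖a‖ ‖b‖ := Prod.norm_def (a, b) ▸ norm_pos_iff.mpr h
  rcases lt_max_iff.mp hpos with ha | hb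
  · exact add_pos_of_pos_of_nonneg (pow_pos ha 2) (sq_nonneg _)
  · exact add_pos_of_nonneg_of_pos (sq_nonneg _) (pow_pos hb 2)

section OneSoliton

noncomputable def solitonVector (lam θ : ℂ) (x : ℝ) (γ₁ γ₂ γ₃ : ℂ) : Fin 3 → ℂ :=
  ![exp (-(I * lam * x)) * γ₁, exp (I * θ) * γ₂, exp (I * θ) * γ₃]

noncomputable def borderedMatrix (N lam θ : ℂ) (x : ℝ) (γ₁ γ₂ : ℂ) : Matrix (Fin 2) (Fin 2) ℂ :=
  !![N, -(starRingEnd ℂ (exp (I * θ)) * starRingEnd ℂ γ₂); exp (-(I * lam * x)) * γ₁, 0]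

variable {N lam θ γ₁ γ₂ γ₃ : ℂ} {x : ℝ}

theorem sum_conj_mul_self_solitonVector :
    ∑ i, starRingEnd ℂ (solitonVector lam θ x γ₁ γ₂ γ₃ i) * solitonVector lam θ x γ₁ γ₂ γ₃ i
      = ((‖γ₁‖ ^ 2 * Real.exp (2 * (lam.im * x))
          + (‖γ₂‖ ^ 2 + ‖γ₃‖ ^ 2) * Real.exp (-2 * θ.im) : ℝ) : ℂ) := by
  simp only [solitonVector, Fin.sum_univ_three, cons_val_zero, cons_val_one, cons_val_two,
    head_cons, tail_cons, conj_exp_mul_mul_self]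
  simp only [neg_re, mul_re, I_re, I_im, ofReal_re, ofReal_im, mul_im, zero_mul, one_mul, mul_zero,
    sub_zero, zero_sub]
  push_cast
  ring_nf

theorem det_borderedMatrix :
    (borderedMatrix N lam θ x γ₁ γ₂).det
      = starRingEnd ℂ γ₂ * γ₁ * (Real.exp (lam.im * x - θ.im) * exp (-(θ.re + lam.re * x) * I)) := by
  have hphase : starRingEnd ℂ (I * θ) + -(I * lam * x)
      = ((lam.im * x - θ.im : ℝ) : ℂ) + -(θ.re + lam.re * x) * I := by
    apply Complex.ext <;> simp <;> ring
  rw [borderedMatrix, det_fin_two_of, ofReal_exp, ← Complex.exp_add, ← hphase, Complex.exp_add,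
    exp_conj]
  ring

theorem neg_two_I_mul_det_borderedMatrix_div_eq_sech (hlam : lam.im ≠ 0) (h₁ : γ₁ ≠ 0)
    (h₂₃ : 0 < ‖γ₂‖ ^ 2 + ‖γ₃‖ ^ 2)
    (hN : N = (∑ i, starRingEnd ℂ (solitonVector lam θ x γ₁ γ₂ γ₃ i)
      * solitonVector lam θ x γ₁ γ₂ γ₃ i) / (lam - starRingEnd ℂ lam))
    {g : ℝ} (hg : g = (‖γ₂‖ ^ 2 + ‖γ₃‖ ^ 2) / ‖γ₁‖ ^ 2) :
    -2 * I * (borderedMatrix N lam θ x γ₁ γ₂).det / N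
      = 2 * lam.im * starRingEnd ℂ γ₂ * (starRingEnd ℂ γ₁ * √g)⁻¹
        * exp (-(θ.re + lam.re * x) * I)
        * ((1 / Real.cosh (lam.im * x + θ.im - Real.log √g) : ℝ) : ℂ) := by
  set s := √g
  have hr : 0 < ‖γ₁‖ := norm_pos_iff.mpr h₁
  have hs : 0 < s := Real.sqrt_pos.mpr (by rw [hg]; positivity)
  have hG : ‖γ₂‖ ^ 2 + ‖γ₃‖ ^ 2 = s ^ 2 * ‖γ₁‖ ^ 2 := by
    rw [Real.sq_sqrt (by rw [hg]; positivity), hg]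
    field_simp
  have hcosh : Real.exp (2 * (lam.im * x)) + s ^ 2 * Real.exp (-2 * θ.im)
      = Real.exp (lam.im * x - θ.im) * (2 * s * Real.cosh (lam.im * x + θ.im - Real.log s)) := by
    have h₁ : Real.exp (2 * (lam.im * x))
        = Real.exp (lam.im * x - θ.im) * Real.exp (lam.im * x + θ.im) := by
      rw [← Real.exp_add]; ring_nf
    have h₂ : Real.exp (-2 * θ.im)
        = Real.exp (lam.im * x - θ.im) * Real.exp (-(lam.im * x + θ.im)) := by
      rw [← Real.exp_add]; ring_nf
    rw [h₁, h₂, ← Real.exp_add_sq_mul_exp_neg hs]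
    ring
  have hN' : N = ((‖γ₁‖ ^ 2 * Real.exp (lam.im * x - θ.im)
      * (2 * s * Real.cosh (lam.im * x + θ.im - Real.log s)) : ℝ) : ℂ) / (2 * I * lam.im) := by
    rw [hN, sum_conj_mul_self_solitonVector, sub_conj, mul_assoc, ← hcosh, hG]
    push_cast
    ring
  rw [det_borderedMatrix, hN', mul_inv, inv_conj_eq_div_normSq, normSq_eq_norm_sq]
  have : Real.cosh (lam.im * x + θ.im - Real.log s) ≠ 0 := (Real.cosh_pos _).ne'
  have : (lam.im : ℂ) ≠ 0 := by exact_mod_cast hlam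
  have : (‖γ₁‖ : ℂ) ≠ 0 := by exact_mod_cast hr.ne'
  have : (s : ℂ) ≠ 0 := by exact_mod_cast hs.ne'
  push_cast
  field_simp
  rw [I_sq]
  ring

end OneSoliton

theorem phase_eq (a b α c x t : ℝ) :
    (⟨a, b⟩ : ℂ) * x + 2 * (1 + 4 * (α : ℂ) * ⟨a, b⟩) * ⟨a, b⟩ ^ 2 * (c : ℂ) * t
      = ⟨a * x + 2 * c * t * ((a ^ 2 - b ^ 2) + 4 * α * a * (a ^ 2 - 3 * b ^ 2)),
          b * x + 4 * c * t * b * (a + 2 * α * (3 * a ^ 2 - b ^ 2))⟩ := by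
  apply Complex.ext <;> simp [pow_two] <;> ring

theorem stmt_18_general (a₁ b₁ α ε x t : ℝ) (hb : 0 < b₁)
    (γ₁₁ γ₂₁ γ₃₁ : ℂ) (h11 : γ₁₁ ≠ 0) (h23 : (γ₂₁, γ₃₁) ≠ 0)
    (lam : ℂ) (hlam : lam = ⟨a₁, b₁⟩)
    (θ : ℂ)
    (hθ : θ = lam * (x : ℂ)
      + 2 * (1 + 4 * (α : ℂ) * lam) * lam ^ 2
        * (((4:ℝ) ^ ε * (a₁ ^ 2 + b₁ ^ 2) ^ ε : ℝ) : ℂ) * (t : ℂ))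
    (v : Fin 3 → ℂ)
    (hv : v = ![Complex.exp (-(Complex.I * lam * x)) * γ₁₁,
      Complex.exp (Complex.I * θ) * γ₂₁, Complex.exp (Complex.I * θ) * γ₃₁])
    (N : ℂ) (hN : N = (∑ i : Fin 3, starRingEnd ℂ (v i) * v i) / (lam - starRingEnd ℂ lam))
    (T₁ : Matrix (Fin 2) (Fin 2) ℂ)
    (hT₁ : T₁ = !![N, -(starRingEnd ℂ (Complex.exp (Complex.I * θ)) * starRingEnd ℂ γ₂₁);
      Complex.exp (-(Complex.I * lam * x)) * γ₁₁, 0])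
    (g₁ : ℝ)
    (hg : g₁ = (‖γ₂₁‖ ^ 2 + ‖γ₃₁‖ ^ 2) / ‖γ₁₁‖ ^ 2)
    (f₁ : ℝ)
    (hf₁ : f₁ = 2 * b₁ * x
      + (4:ℝ) ^ (1 + ε) * b₁ * (a₁ + 2 * α * (3 * a₁ ^ 2 - b₁ ^ 2)) * (a₁ ^ 2 + b₁ ^ 2) ^ ε * t
      - Real.log (Real.sqrt g₁))
    (f₂ : ℂ)
    (hf₂ : f₂ = ((-(2 * a₁ * x)
      - (2:ℝ) ^ (1 + 2 * ε) * (4 * α * a₁ * (a₁ ^ 2 - 3 * b₁ ^ 2) + (a₁ ^ 2 - b₁ ^ 2))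
          * (a₁ ^ 2 + b₁ ^ 2) ^ ε * t : ℝ) : ℂ) * Complex.I) :
    -2 * Complex.I * T₁.det / N
      = (2 * b₁ : ℂ) * starRingEnd ℂ γ₂₁ * ((starRingEnd ℂ γ₁₁) * (Real.sqrt g₁ : ℂ))⁻¹
        * Complex.exp f₂ * ((1 / Real.cosh f₁ : ℝ) : ℂ) := by
  have hθ' := hθ.trans (hlam ▸ phase_eq a₁ b₁ α _ x t)
  have h4 : (4:ℝ) ^ (1 + ε) = 4 * 4 ^ ε := by
    rw [Real.rpow_add (by norm_num), Real.rpow_one]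
  have h2 : (2:ℝ) ^ (1 + 2 * ε) = 2 * 4 ^ ε := by
    rw [Real.rpow_add (by norm_num), Real.rpow_one, Real.rpow_mul (by norm_num)]
    norm_num
  have hf₁' : f₁ = lam.im * x + θ.im - Real.log √g₁ := by
    rw [hf₁, hθ', hlam, h4]; ring
  have hf₂' : f₂ = -(θ.re + lam.re * x) * Complex.I := by
    rw [hf₂, hθ', hlam, h2]; push_cast; ring
  have hb' : b₁ = lam.im := by rw [hlam]
  subst hv hT₁
  rw [hf₁', hf₂', hb']
  exact neg_two_I_mul_det_borderedMatrix_div_eq_sech (hb' ▸ hb.ne') h11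
    (sq_norm_add_sq_norm_pos h23) hN hg

/-- For `n = 1` reflectionless Riemann–Hilbert data, the formula
`q₁ = −2i det(T₁)/det(N)` with `N = ⟨v̂₁|v₁⟩/(λ₁ − λ₁*)` and `T₁` the bordered matrix,
evaluated with `⟨v̂₁| = |v₁⟩†`, reduces exactly to the sech expression
`q₁ = 2b₁ γ₂₁* (γ₁₁* √g₁)⁻¹ e^{f₂} sech f₁`. -/
theorem stmt_18 (a₁ b₁ α ε x t : ℝ) (hb : 0 < b₁) (hε : ε ∈ Set.Ico (0:ℝ) 1)
    (γ₁₁ γ₂₁ γ₃₁ : ℂ) (h11 : γ₁₁ ≠ 0) (h23 : (γ₂₁, γ₃₁) ≠ 0)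
    (lam : ℂ) (hlam : lam = ⟨a₁, b₁⟩)
    (θ : ℂ)
    (hθ : θ = lam * (x : ℂ)
      + 2 * (1 + 4 * (α : ℂ) * lam) * lam ^ 2
        * (((4:ℝ) ^ ε * (a₁ ^ 2 + b₁ ^ 2) ^ ε : ℝ) : ℂ) * (t : ℂ))
    (v : Fin 3 → ℂ)
    (hv : v = ![Complex.exp (-(Complex.I * lam * x)) * γ₁₁,
      Complex.exp (Complex.I * θ) * γ₂₁, Complex.exp (Complex.I * θ) * γ₃₁])
    (N : ℂ) (hN : N = (∑ i : Fin 3, starRingEnd ℂ (v i) * v i) / (lam - starRingEnd ℂ lam))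
    (T₁ : Matrix (Fin 2) (Fin 2) ℂ)
    (hT₁ : T₁ = !![N, -(starRingEnd ℂ (Complex.exp (Complex.I * θ)) * starRingEnd ℂ γ₂₁);
      Complex.exp (-(Complex.I * lam * x)) * γ₁₁, 0])
    (g₁ : ℝ)
    (hg : g₁ = (‖γ₂₁‖ ^ 2 + ‖γ₃₁‖ ^ 2) / ‖γ₁₁‖ ^ 2)
    (f₁ : ℝ)
    (hf₁ : f₁ = 2 * b₁ * x
      + (4:ℝ) ^ (1 + ε) * b₁ * (a₁ + 2 * α * (3 * a₁ ^ 2 - b₁ ^ 2)) * (a₁ ^ 2 + b₁ ^ 2) ^ ε * t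
      - Real.log (Real.sqrt g₁))
    (f₂ : ℂ)
    (hf₂ : f₂ = ((-(2 * a₁ * x)
      - (2:ℝ) ^ (1 + 2 * ε) * (4 * α * a₁ * (a₁ ^ 2 - 3 * b₁ ^ 2) + (a₁ ^ 2 - b₁ ^ 2))
          * (a₁ ^ 2 + b₁ ^ 2) ^ ε * t : ℝ) : ℂ) * Complex.I) :
    -2 * Complex.I * T₁.det / N
      = (2 * b₁ : ℂ) * starRingEnd ℂ γ₂₁ * ((starRingEnd ℂ γ₁₁) * (Real.sqrt g₁ : ℂ))⁻¹
        * Complex.exp f₂ * ((1 / Real.cosh f₁ : ℝ) : ℂ) :=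
  stmt_18_general a₁ b₁ α ε x t hb γ₁₁ γ₂₁ γ₃₁ h11 h23 lam hlam θ hθ v hv N hN T₁ hT₁ g₁ hg f₁ hf₁
    f₂ hf₂
end
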